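/- Let f be in T(X,P). Then f is a bijection of X whose inverse also preserves P (i.e. f is a unit of the monoid T(X,P)) if and only if (i) for every i in I the restriction of f to X_i, viewed as a map from X_i to X_{chi_f(i)}, is bijective, and (ii) the character chi_f : I -> I is a bijection. -/

import Mathlib

open Cardinal

/-- `P : I → Set X` is a partition of `X`: blocks are nonempty, pairwise disjoint,
and cover `X`. -/
def IsPartition {X I : Type*} (P : I → Set X) : Prop :=
  (∀ i, (P i).Nonempty) ∧ Pairwise (Function.onFun Disjoint P) ∧ ∀ x, ∃ i, x ∈ P i

/-- `f` belongs to `B(X,P)` with character `χ`: `f` maps each block `P i` into the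
block `P (χ i)`, and `χ` is a bijection of the index set. -/
def MemB {X I : Type*} (P : I → Set X) (f : X → X) (χ : I → I) : Prop :=
  (∀ i, Set.MapsTo f (P i) (P (χ i))) ∧ Function.Bijective χ

/-! A unit `f` of `T(X,P)` with inverse `v` has, block by block, the inverse `v` on
`P (χf i) → P i`, and the characters are inverse because blocks are nonempty and disjoint.
Conversely, bijective restrictions over a bijective character glue to a bijection of `X`;
its inverse preserves `P` with character `χf⁻¹`, since every point lies in some block. -/

namespace IsPartition

variable {X I : Type*} {P : I → Set X}

theorem eq_of_mem (hP : IsPartition P) {x : X} {i j : I} (hi : x ∈ P i) (hj : x ∈ P j) :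
    i = j := by
  by_contra h
  exact Set.disjoint_left.mp (hP.2.1 h) hi hj

theorem leftInverse_of_mapsTo (hP : IsPartition P) {f v : X → X} {χf χv : I → I}
    (hf : ∀ i, Set.MapsTo f (P i) (P (χf i))) (hv : ∀ i, Set.MapsTo v (P i) (P (χv i)))
    (hvf : Function.LeftInverse v f) : Function.LeftInverse χv χf := by
  intro i
  obtain ⟨x, hx⟩ := hP.1 i
  have hvfx : v (f x) ∈ P (χv (χf i)) := hv _ (hf i hx)
  rw [hvf x] at hvfx
  exact hP.eq_of_mem hvfx hx

theorem mapsTo_of_rightInverse (hP : IsPartition P) {f v : X → X} {χf χv : I → I}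
    (hf : ∀ i, Set.MapsTo f (P i) (P (χf i))) (hfv : Function.RightInverse v f)
    (hχ : Function.LeftInverse χv χf) (i : I) : Set.MapsTo v (P i) (P (χv i)) := by
  intro x hx
  obtain ⟨k, hk⟩ := hP.2.2 (v x)
  have hfvx : f (v x) ∈ P (χf k) := hf k hk
  rw [hfv x] at hfvx
  rwa [← hP.eq_of_mem hfvx hx, hχ k]

theorem bijective_of_bijOn (hP : IsPartition P) {f : X → X} {χ : I → I}
    (hf : ∀ i, Set.BijOn f (P i) (P (χ i))) (hχ : Function.Bijective χ) :
    Function.Bijective f := by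
  constructor
  · intro x y hxy
    obtain ⟨i, hi⟩ := hP.2.2 x
    obtain ⟨j, hj⟩ := hP.2.2 y
    have hχij : χ i = χ j := hP.eq_of_mem ((hf i).mapsTo hi) (hxy ▸ (hf j).mapsTo hj)
    rw [hχ.1 hχij] at hi
    exact (hf j).injOn hi hj hxy
  · intro y
    obtain ⟨j, hj⟩ := hP.2.2 y
    obtain ⟨i, rfl⟩ := hχ.2 j
    obtain ⟨x, -, hx⟩ := (hf i).surjOn hj
    exact ⟨x, hx⟩

end IsPartition

theorem unit_iff_general {X I : Type*} (P : I → Set X) (hP : IsPartition P)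
    (f : X → X) (χf : I → I) (hf : ∀ i, Set.MapsTo f (P i) (P (χf i))) :
    (∃ (v : X → X) (χv : I → I), (∀ i, Set.MapsTo v (P i) (P (χv i))) ∧
        (∀ x, v (f x) = x) ∧ (∀ x, f (v x) = x)) ↔
      (∀ i, Set.BijOn f (P i) (P (χf i))) ∧ Function.Bijective χf := by
  constructor
  · rintro ⟨v, χv, hv, hvf, hfv⟩
    replace hvf : Function.LeftInverse v f := hvf
    replace hfv : Function.LeftInverse f v := hfv
    have hχvf : Function.LeftInverse χv χf := hP.leftInverse_of_mapsTo hf hv hvf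
    have hχfv : Function.LeftInverse χf χv := hP.leftInverse_of_mapsTo hv hf hfv
    refine ⟨fun i => Set.InvOn.bijOn ⟨hvf.leftInvOn _, hfv.leftInvOn _⟩ (hf i) ?_,
      ⟨hχvf.injective, hχfv.surjective⟩⟩
    simpa only [hχvf i] using hv (χf i)
  · rintro ⟨hbij, hχ⟩
    let e := Equiv.ofBijective f (hP.bijective_of_bijOn hbij hχ)
    let eχ := Equiv.ofBijective χf hχ
    exact ⟨e.symm, eχ.symm,
      hP.mapsTo_of_rightInverse hf e.apply_symm_apply eχ.symm_apply_apply,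
      e.symm_apply_apply, e.apply_symm_apply⟩

/-- `f ∈ T(X,P)` is a unit of `T(X,P)` iff every restriction `f : P i → P (χf i)`
is bijective and the character `χf` is a bijection of `I`. -/
theorem unit_iff {X I : Type*} [Nonempty X] (P : I → Set X) (hP : IsPartition P)
    (f : X → X) (χf : I → I) (hf : ∀ i, Set.MapsTo f (P i) (P (χf i))) :
    (∃ (v : X → X) (χv : I → I), (∀ i, Set.MapsTo v (P i) (P (χv i))) ∧
        (∀ x, v (f x) = x) ∧ (∀ x, f (v x) = x)) ↔
      (∀ i, Set.BijOn f (P i) (P (χf i))) ∧ Function.Bijective χf :=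
  unit_iff_general P hP f χf hf
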